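/- arXiv:1703.03214 — 2 statements merged into one kernel-verified Lean document; each statement's English description precedes it below -/
import Mathlib

section
/- Consider N users and a finite horizon of T time slots. In each slot the scheduler picks one user a, and with probability β_a that user's received-packet count increases by one (otherwise the state is unchanged), independently across slots. Each user i must receive p_i(T) packets by the end of slot T-1 (a single common terminal deadline check). Then for any scheduling policy, the probability that all users meet their demands depends only on the multiset of total remaining demands and the channel probabilities, and the earliest-deadline-first (here: any work-conserving) policy that serves users with unmet demand achieves the maximum success probability. -/
/-!
Relabelling the users commutes with the Bellman recursion, which gives the invariance.

For optimality, write `Q_k(s, a)` for the value of serving `a` in state `s` and then acting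
optimally. With `k + 1` slots left, serving two users `a ≠ b` whose demands are unmet gives the
same value: expanding the optimal value one step further by serving the other user, both orders
reach `s + e_a + e_b` with the same weights. Serving a user whose demand is already met leaves the
reward-relevant state unchanged, so it is never better than serving an unmet user, the optimal
value being monotone in the state. Hence `uStar (k + 1) s = Q_k(s, a)` for every unmet `a`,
which is exactly the choice a work-conserving policy makes.
-/

/-- Optimal value function of the finite-horizon scheduling MDP, indexed by the number of
remaining slots: choosing user `a` increments coordinate `a` with probability `β a`,
otherwise the state is unchanged. -/
noncomputable def uStar {N : ℕ} (β : Fin N → ℝ) (r : (Fin N → ℕ) → ℝ) :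
    ℕ → (Fin N → ℕ) → ℝ
  | 0, s => r s
  | k + 1, s =>
      ⨆ a : Fin N,
        (β a * uStar β r k (Function.update s a (s a + 1)) + (1 - β a) * uStar β r k s)

/-- Value function of a (Markov, deterministic) policy `d`, indexed by remaining slots. -/
noncomputable def uPol {N : ℕ} (β : Fin N → ℝ) (r : (Fin N → ℕ) → ℝ)
    (d : ℕ → (Fin N → ℕ) → Fin N) : ℕ → (Fin N → ℕ) → ℝ
  | 0, s => r s
  | k + 1, s =>
      β (d k s) * uPol β r d k (Function.update s (d k s) (s (d k s) + 1)) +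
        (1 - β (d k s)) * uPol β r d k s

open Function

section

variable {N : ℕ}

noncomputable def metReward (p : Fin N → ℕ) (z : Fin N → ℕ) : ℝ :=
  if ∀ i, p i ≤ z i then 1 else 0

theorem metReward_comp_perm (p : Fin N → ℕ) (σ : Equiv.Perm (Fin N)) (z : Fin N → ℕ) :
    metReward (p ∘ σ) (z ∘ σ) = metReward p z := by
  simp only [metReward, comp_apply, σ.forall_congr_right (q := fun i => p i ≤ z i)]

theorem uPol_relabel (σ : Equiv.Perm (Fin N)) (β : Fin N → ℝ) {r r' : (Fin N → ℕ) → ℝ}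
    (hr : ∀ z, r' (z ∘ σ) = r z) (d : ℕ → (Fin N → ℕ) → Fin N) :
    ∀ k s, uPol (β ∘ σ) r' (fun k z => σ.symm (d k (z ∘ σ.symm))) k (s ∘ σ) = uPol β r d k s
  | 0, s => hr s
  | k + 1, s => by
    have hs : (s ∘ σ) ∘ σ.symm = s := by ext; simp
    simp only [uPol, comp_apply, Equiv.apply_symm_apply, hs, ← update_comp_equiv]
    rw [uPol_relabel σ β hr d k, uPol_relabel σ β hr d k]

noncomputable def qStar (β : Fin N → ℝ) (r : (Fin N → ℕ) → ℝ) (k : ℕ) (s : Fin N → ℕ)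
    (a : Fin N) : ℝ :=
  β a * uStar β r k (update s a (s a + 1)) + (1 - β a) * uStar β r k s

theorem uStar_succ (β : Fin N → ℝ) (r : (Fin N → ℕ) → ℝ) (k : ℕ) (s : Fin N → ℕ) :
    uStar β r (k + 1) s = ⨆ a, qStar β r k s a :=
  rfl

theorem qStar_le_uStar_succ (β : Fin N → ℝ) (r : (Fin N → ℕ) → ℝ) (k : ℕ) (s : Fin N → ℕ)
    (a : Fin N) : qStar β r k s a ≤ uStar β r (k + 1) s :=
  le_ciSup (Set.finite_range _).bddAbove a

theorem uStar_monotone {β : Fin N → ℝ} (hβ : ∀ a, 0 ≤ β a ∧ β a ≤ 1)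
    {r : (Fin N → ℕ) → ℝ} (hr : Monotone r) : ∀ k, Monotone (uStar β r k)
  | 0 => hr
  | k + 1 => fun s s' hs => by
    refine ciSup_mono (Set.finite_range _).bddAbove fun a => ?_
    have hu := uStar_monotone hβ hr k
    have hupd : update s a (s a + 1) ≤ update s' a (s' a + 1) :=
      update_le_update_iff.2 ⟨Nat.succ_le_succ (hs a), fun j _ => hs j⟩
    exact add_le_add (mul_le_mul_of_nonneg_left (hu hupd) (hβ a).1)
      (mul_le_mul_of_nonneg_left (hu hs) (sub_nonneg.2 (hβ a).2))

theorem uStar_congr_inf (β : Fin N → ℝ) {r : (Fin N → ℕ) → ℝ} {p : Fin N → ℕ}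
    (hr : ∀ z z', z ⊓ p = z' ⊓ p → r z = r z') :
    ∀ k s s', s ⊓ p = s' ⊓ p → uStar β r k s = uStar β r k s'
  | 0, s, s', hs => hr s s' hs
  | k + 1, s, s', hs => by
    refine iSup_congr fun a => ?_
    have hupd : update s a (s a + 1) ⊓ p = update s' a (s' a + 1) ⊓ p := by
      funext i
      have hi := congrFun hs i
      rcases eq_or_ne i a with rfl | hia
      · simp only [Pi.inf_apply, update_self] at hi ⊢; omega
      · simpa [update_of_ne hia] using hi
    rw [uStar_congr_inf β hr k _ _ hupd, uStar_congr_inf β hr k s s' hs]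

def IsWorkConserving (p : Fin N → ℕ) (d : ℕ → (Fin N → ℕ) → Fin N) : Prop :=
  ∀ k s, (∃ i, s i < p i) → s (d k s) < p (d k s)

variable {p : Fin N → ℕ}

theorem metReward_monotone : Monotone (metReward p) := fun z z' hz => by
  unfold metReward
  split_ifs with h h'
  exacts [le_rfl, absurd (fun i => (h i).trans (hz i)) h', zero_le_one, le_rfl]

theorem metReward_congr_inf {z z' : Fin N → ℕ} (hz : z ⊓ p = z' ⊓ p) :
    metReward p z = metReward p z' := by
  have key : ∀ z : Fin N → ℕ, (∀ i, p i ≤ z i) ↔ p ≤ z ⊓ p := fun z => by simp [Pi.le_def]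
  exact if_congr ((key z).trans (hz ▸ (key z').symm)) rfl rfl

theorem metReward_of_lt {z : Fin N → ℕ} {i : Fin N} (hi : z i < p i) : metReward p z = 0 :=
  if_neg fun h => (h i).not_gt hi

theorem uPol_metReward_of_le (β : Fin N → ℝ) (d : ℕ → (Fin N → ℕ) → Fin N) :
    ∀ k s, p ≤ s → uPol β (metReward p) d k s = 1
  | 0, _, hs => if_pos hs
  | k + 1, s, hs => by
    have hs' : p ≤ update s (d k s) (s (d k s) + 1) := hs.trans (le_update_self_iff.2 (by omega))
    simp only [uPol, uPol_metReward_of_le β d k _ hs, uPol_metReward_of_le β d k _ hs']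
    ring

theorem uStar_metReward_of_le [Nonempty (Fin N)] (β : Fin N → ℝ) :
    ∀ k s, p ≤ s → uStar β (metReward p) k s = 1
  | 0, _, hs => if_pos hs
  | k + 1, s, hs => by
    have hq : ∀ a, qStar β (metReward p) k s a = 1 := fun a => by
      have hs' : p ≤ update s a (s a + 1) := hs.trans (le_update_self_iff.2 (by omega))
      simp only [qStar, uStar_metReward_of_le β k _ hs, uStar_metReward_of_le β k _ hs']
      ring
    simp only [uStar_succ, hq, ciSup_const]

theorem uStar_update_of_le (β : Fin N → ℝ) {k : ℕ} {s : Fin N → ℕ} {a : Fin N}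
    (ha : p a ≤ s a) :
    uStar β (metReward p) k (update s a (s a + 1)) = uStar β (metReward p) k s := by
  refine uStar_congr_inf β (fun z z' => metReward_congr_inf) k _ _ (funext fun i => ?_)
  rcases eq_or_ne i a with rfl | hia
  · simp only [Pi.inf_apply, update_self]; omega
  · simp [update_of_ne hia]

theorem uStar_succ_eq_qStar_of_exchange {β : Fin N → ℝ} (hβ : ∀ a, 0 ≤ β a ∧ β a ≤ 1) {k : ℕ}
    (hE : ∀ s a b, s a < p a → s b < p b →
      qStar β (metReward p) k s a = qStar β (metReward p) k s b)
    {s : Fin N → ℕ} {a : Fin N} (ha : s a < p a) :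
    uStar β (metReward p) (k + 1) s = qStar β (metReward p) k s a := by
  have : Nonempty (Fin N) := ⟨a⟩
  rw [uStar_succ]
  refine le_antisymm (ciSup_le fun b => ?_) (qStar_le_uStar_succ β _ k s a)
  rcases lt_or_ge (s b) (p b) with hb | hb
  · exact (hE s b a hb ha).le
  · -- serving a user whose demand is already met wastes the slot
    have hmono : uStar β (metReward p) k s ≤ uStar β (metReward p) k (update s a (s a + 1)) :=
      uStar_monotone hβ metReward_monotone k (le_update_self_iff.2 (Nat.le_succ _))
    have hwaste : qStar β (metReward p) k s b = uStar β (metReward p) k s := by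
      rw [qStar, uStar_update_of_le β hb]; ring
    rw [hwaste, qStar]
    nlinarith [(hβ a).1]

theorem qStar_eq_of_lt {β : Fin N → ℝ} (hβ : ∀ a, 0 ≤ β a ∧ β a ≤ 1) :
    ∀ k s a b, s a < p a → s b < p b →
      qStar β (metReward p) k s a = qStar β (metReward p) k s b := by
  intro k
  induction k with
  | zero =>
    intro s a b ha hb
    rcases eq_or_ne a b with rfl | hab
    · rfl
    have hb' : update s a (s a + 1) b < p b := by rwa [update_of_ne hab.symm]
    have ha' : update s b (s b + 1) a < p a := by rwa [update_of_ne hab]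
    simp only [qStar, uStar, metReward_of_lt ha, metReward_of_lt hb', metReward_of_lt ha']
    ring
  | succ k ih =>
    intro s a b ha hb
    rcases eq_or_ne a b with rfl | hab
    · rfl
    have hopt {s : Fin N → ℕ} {a : Fin N} (h : s a < p a) :=
      uStar_succ_eq_qStar_of_exchange hβ ih h
    have hb' : update s a (s a + 1) b < p b := by rwa [update_of_ne hab.symm]
    have ha' : update s b (s b + 1) a < p a := by rwa [update_of_ne hab]
    -- both orders of serving `a` and `b` lead to the same two-step expansion
    simp only [qStar]
    rw [hopt hb', hopt ha']
    conv_lhs => rw [hopt hb]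
    conv_rhs => rw [hopt ha]
    simp only [qStar, update_of_ne hab.symm, update_of_ne hab, update_comm hab.symm]
    ring

theorem uStar_succ_eq_qStar {β : Fin N → ℝ} (hβ : ∀ a, 0 ≤ β a ∧ β a ≤ 1) {k : ℕ}
    {s : Fin N → ℕ} {a : Fin N} (ha : s a < p a) :
    uStar β (metReward p) (k + 1) s = qStar β (metReward p) k s a :=
  uStar_succ_eq_qStar_of_exchange hβ (qStar_eq_of_lt hβ k) ha

theorem uPol_eq_uStar_of_isWorkConserving [Nonempty (Fin N)] {β : Fin N → ℝ}
    (hβ : ∀ a, 0 ≤ β a ∧ β a ≤ 1) {d : ℕ → (Fin N → ℕ) → Fin N} (hd : IsWorkConserving p d) :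
    ∀ k s, uPol β (metReward p) d k s = uStar β (metReward p) k s
  | 0, _ => rfl
  | k + 1, s => by
    by_cases hs : ∃ i, s i < p i
    · rw [uStar_succ_eq_qStar hβ (hd k s hs), qStar, uPol,
        uPol_eq_uStar_of_isWorkConserving hβ hd k, uPol_eq_uStar_of_isWorkConserving hβ hd k]
    · have hps : p ≤ s := fun i => not_lt.1 fun hi => hs ⟨i, hi⟩
      rw [uPol_metReward_of_le β d _ s hps, uStar_metReward_of_le β _ s hps]

end

/-- With a single common terminal deadline (terminal reward `1` iff `s i ≥ p i` for all
users `i`):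
(a) the success probability of any policy is invariant under relabeling of the users
(it depends only on the multiset of pairs `(β i, p i)`), and
(b) every work-conserving policy — one that always serves a user with unmet demand
whenever some user has unmet demand — achieves the maximum success probability. -/
theorem stmt_0 {N : ℕ} [NeZero N] (β : Fin N → ℝ) (hβ : ∀ a, 0 < β a ∧ β a ≤ 1)
    (p : Fin N → ℕ) :
    (∀ (σ : Equiv.Perm (Fin N)) (d : ℕ → (Fin N → ℕ) → Fin N) (k : ℕ) (s : Fin N → ℕ),
      uPol (fun i => β (σ i)) (fun z => if ∀ i, p (σ i) ≤ z i then (1 : ℝ) else 0)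
          (fun k z => σ.symm (d k (fun i => z (σ.symm i)))) k (fun i => s (σ i)) =
        uPol β (fun z => if ∀ i, p i ≤ z i then (1 : ℝ) else 0) d k s) ∧
    (∀ d : ℕ → (Fin N → ℕ) → Fin N,
      (∀ k s, (∃ i, s i < p i) → s (d k s) < p (d k s)) →
      ∀ k s, uPol β (fun z => if ∀ i, p i ≤ z i then (1 : ℝ) else 0) d k s =
        uStar β (fun z => if ∀ i, p i ≤ z i then (1 : ℝ) else 0) k s) :=
  ⟨fun σ d => uPol_relabel σ β (metReward_comp_perm p σ) d,
    fun _ hd => uPol_eq_uStar_of_isWorkConserving (fun a => ⟨(hβ a).1.le, (hβ a).2⟩) hd⟩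
end

section
/- In the two-user, horizon-T scheduling MDP where user 1 needs q_1 more packets by slot l_1 and user 2 needs q_2 more packets by slot l_2 with l_1 ≤ l_2 ≤ T, serving user 1 until its demand is met and then serving user 2 maximizes the probability that both users meet their deadlines, over all (possibly history-dependent) scheduling policies. -/
/-!
Both events are determined by the first `l₂` slots, and in slot `t` the outcome is the single
variable `Y (t, i)` of the user `i` served then. These variables are distinct along any path, so
by independence each path of outcomes has the product of the Bernoulli weights as probability,
and the success probability of a policy is the value of the finite-horizon decision problem,
computed by backward recursion over histories.

The value of EDF depends only on the number of slots left and the two success counts, and it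
satisfies the Bellman inequality for both actions: serving user `0` after its deadline is
wasted, and serving user `1` while user `0` still needs packets is no better than postponing
it (an exchange argument by induction on the horizon). Hence it dominates every policy.
-/

open MeasureTheory ProbabilityTheory

/-- History of a (possibly history-dependent) two-user scheduling policy `π` after `t`
slots: given per-slot potential outcomes `b t i` (success of a transmission to user `i`
in slot `t`), the policy looks at the full past history of (served user, outcome) pairs
and picks the user to serve in the next slot. -/
def run (π : List (Fin 2 × Bool) → Fin 2) (b : ℕ → Fin 2 → Bool) : ℕ → List (Fin 2 × Bool)
  | 0 => []
  | t + 1 =>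
      let h := run π b t
      h ++ [(π h, b t (π h))]

/-- Number of successful deliveries to user `i` recorded in history `h`. -/
def succCount (i : Fin 2) (h : List (Fin 2 × Bool)) : ℕ :=
  h.countP fun x => decide (x.1 = i) && x.2

namespace TwoUserScheduling

open Finset

section Extend

variable {ι : Type*} (π : List (ι × Bool) → ι)

def extend : List (ι × Bool) → List Bool → List (ι × Bool)
  | h, [] => h
  | h, x :: s => extend (h ++ [(π h, x)]) s

lemma extend_append (h : List (ι × Bool)) (s : List Bool) (x : Bool) :
    extend π h (s ++ [x]) = extend π h s ++ [(π (extend π h s), x)] := by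
  induction s generalizing h with
  | nil => rfl
  | cons y s ih => exact ih _

lemma map_snd_extend (h : List (ι × Bool)) (s : List Bool) :
    (extend π h s).map Prod.snd = h.map Prod.snd ++ s := by
  induction s generalizing h with
  | nil => simp [extend]
  | cons x s ih => simp [extend, ih]

lemma extend_injective (h : List (ι × Bool)) : Function.Injective (extend π h) := fun s s' hs => by
  simpa [map_snd_extend] using congrArg (List.map Prod.snd) hs

end Extend

section Run

variable (π : List (Fin 2 × Bool) → Fin 2) (b : ℕ → Fin 2 → Bool)

lemma length_run (n : ℕ) : (run π b n).length = n := by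
  induction n with
  | zero => rfl
  | succ n ih => simp [run, ih]

lemma take_run {t n : ℕ} (htn : t ≤ n) : (run π b n).take t = run π b t := by
  induction n, htn using Nat.le_induction with
  | base => exact List.take_of_length_le (length_run π b t).le
  | succ n htn ih =>
    rw [run, List.take_append_of_le_length (by rw [length_run]; exact htn), ih]

lemma extend_map_snd_run (n : ℕ) : extend π [] ((run π b n).map Prod.snd) = run π b n := by
  induction n with
  | zero => rfl
  | succ n ih => rw [run, List.map_append, List.map_singleton, extend_append, ih]

lemma run_eq_extend_iff (s : List Bool) :
    run π b s.length = extend π [] s ↔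
      ∀ t < s.length, b t (π (extend π [] (s.take t))) = s.getD t false := by
  induction s using List.reverseRecOn with
  | nil => simp [run, extend]
  | append_singleton s x ih =>
    have hlast : run π b (s.length + 1) = extend π [] (s ++ [x]) ↔
        run π b s.length = extend π [] s ∧ b s.length (π (extend π [] s)) = x := by
      rw [run, extend_append]
      constructor
      · intro heq
        obtain ⟨hrun, hx⟩ := List.append_inj' heq rfl
        rw [hrun] at hx
        exact ⟨hrun, by simpa using hx⟩
      · rintro ⟨hrun, rfl⟩
        rw [hrun]
    have hslots : (∀ t < s.length + 1,
        b t (π (extend π [] ((s ++ [x]).take t))) = (s ++ [x]).getD t false) ↔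
        (∀ t < s.length, b t (π (extend π [] (s.take t))) = s.getD t false) ∧
          b s.length (π (extend π [] s)) = x := by
      rw [Nat.forall_lt_succ_right, List.take_left' rfl,
        List.getD_append_right _ _ _ _ le_rfl, Nat.sub_self]
      refine and_congr (forall₂_congr fun t ht => ?_) Iff.rfl
      rw [List.take_append_of_le_length ht.le, List.getD_append _ _ _ _ ht]
    rw [List.length_append, List.length_singleton, hlast, hslots, ih]

lemma setOf_run_eq_extend {Ω : Type*} (Y : ℕ × Fin 2 → Ω → Bool) (s : List Bool) :
    {ω | run π (fun t i => Y (t, i) ω) s.length = extend π [] s} =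
      ⋂ t ∈ range s.length, Y (t, π (extend π [] (s.take t))) ⁻¹' {s.getD t false} := by
  ext ω
  simp [run_eq_extend_iff]

end Run

def boolLists : ℕ → Finset (List Bool)
  | 0 => {[]}
  | n + 1 => (boolLists n).image (List.cons true) ∪ (boolLists n).image (List.cons false)

lemma mem_boolLists {s : List Bool} {n : ℕ} : s ∈ boolLists n ↔ s.length = n := by
  induction s generalizing n with
  | nil => cases n <;> simp [boolLists]
  | cons x s ih => cases n <;> cases x <;> simp [boolLists, ih]

lemma sum_boolLists_succ {M : Type*} [AddCommMonoid M] (n : ℕ) (f : List Bool → M) :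
    ∑ s ∈ boolLists (n + 1), f s =
      ∑ s ∈ boolLists n, f (true :: s) + ∑ s ∈ boolLists n, f (false :: s) := by
  have hdisj : Disjoint ((boolLists n).image (List.cons true))
      ((boolLists n).image (List.cons false)) := by
    simp [Finset.disjoint_left]
  rw [boolLists, sum_union hdisj, sum_image fun _ _ _ _ h => List.cons_injective h,
    sum_image fun _ _ _ _ h => List.cons_injective h]

def bernoulliWeight (p : ℝ) (x : Bool) : ℝ := if x then p else 1 - p

lemma bernoulliWeight_nonneg {p : ℝ} (hp₀ : 0 ≤ p) (hp₁ : p ≤ 1) (x : Bool) :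
    0 ≤ bernoulliWeight p x := by
  cases x <;> simp [bernoulliWeight] <;> linarith

section Value

variable {ι : Type*} (β : ι → ℝ) (π : List (ι × Bool) → ι)

def pathProb (h : List (ι × Bool)) (s : List Bool) : ℝ :=
  ∏ t ∈ range s.length, bernoulliWeight (β (π (extend π h (s.take t)))) (s.getD t false)

lemma pathProb_cons (h : List (ι × Bool)) (x : Bool) (s : List Bool) :
    pathProb β π h (x :: s) =
      bernoulliWeight (β (π h)) x * pathProb β π (h ++ [(π h, x)]) s := by
  rw [pathProb, List.length_cons, prod_range_succ', mul_comm]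
  rfl

lemma pathProb_nonneg (hβ : ∀ i, 0 ≤ β i ∧ β i ≤ 1) (h : List (ι × Bool)) (s : List Bool) :
    0 ≤ pathProb β π h s :=
  prod_nonneg fun _ _ => bernoulliWeight_nonneg (hβ _).1 (hβ _).2 _

/-- The expected terminal payoff `g` after `k` more slots of policy `π` from history `h`. -/
def policyValue (g : List (ι × Bool) → ℝ) : ℕ → List (ι × Bool) → ℝ
  | 0, h => g h
  | k + 1, h => β (π h) * policyValue g k (h ++ [(π h, true)])
      + (1 - β (π h)) * policyValue g k (h ++ [(π h, false)])

lemma policyValue_eq_sum (g : List (ι × Bool) → ℝ) (k : ℕ) (h : List (ι × Bool)) :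
    policyValue β π g k h = ∑ s ∈ boolLists k, pathProb β π h s * g (extend π h s) := by
  induction k generalizing h with
  | zero => simp [policyValue, boolLists, pathProb, extend]
  | succ k ih =>
    simp only [policyValue, sum_boolLists_succ, ih, pathProb_cons, extend, bernoulliWeight,
      mul_sum, mul_assoc, if_true, Bool.false_eq_true, if_false]

end Value

section Measure

variable {Ω : Type*} [MeasurableSpace Ω] {μ : Measure Ω} {β : Fin 2 → ℝ}
  {Y : ℕ × Fin 2 → Ω → Bool}

lemma measure_preimage_eq_bernoulliWeight [IsProbabilityMeasure μ] (hβ : ∀ i, 0 ≤ β i)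
    (hmeas : ∀ p, Measurable (Y p)) (hY : ∀ t i, μ {ω | Y (t, i) ω = true} = ENNReal.ofReal (β i))
    (p : ℕ × Fin 2) (x : Bool) :
    μ (Y p ⁻¹' {x}) = ENNReal.ofReal (bernoulliWeight (β p.2) x) := by
  obtain ⟨t, i⟩ := p
  cases x
  · have hcompl : Y (t, i) ⁻¹' {false} = {ω | Y (t, i) ω = true}ᶜ := by ext; simp
    rw [hcompl, prob_compl_eq_one_sub (s := {ω | Y (t, i) ω = true})
      (hmeas (t, i) (measurableSet_singleton true)), hY,
      bernoulliWeight, if_neg Bool.false_ne_true, ENNReal.ofReal_sub _ (hβ i), ENNReal.ofReal_one]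
  · exact hY t i

lemma measurableSet_run_eq_extend (hmeas : ∀ p, Measurable (Y p))
    (π : List (Fin 2 × Bool) → Fin 2) (s : List Bool) :
    MeasurableSet {ω | run π (fun t i => Y (t, i) ω) s.length = extend π [] s} := by
  rw [setOf_run_eq_extend]
  exact Finset.measurableSet_biInter _ fun _ _ => hmeas _ (measurableSet_singleton _)

lemma measure_run_eq_extend [IsProbabilityMeasure μ] (hβ : ∀ i, 0 ≤ β i ∧ β i ≤ 1)
    (hmeas : ∀ p, Measurable (Y p)) (hindep : iIndepFun Y μ)
    (hY : ∀ t i, μ {ω | Y (t, i) ω = true} = ENNReal.ofReal (β i))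
    (π : List (Fin 2 × Bool) → Fin 2) (s : List Bool) :
    μ {ω | run π (fun t i => Y (t, i) ω) s.length = extend π [] s} =
      ENNReal.ofReal (pathProb β π [] s) := by
  have hslots : Function.Injective fun t => (t, π (extend π [] (s.take t))) :=
    fun _ _ h => congrArg Prod.fst h
  rw [setOf_run_eq_extend, (hindep.precomp hslots).meas_biInter
      fun t _ => ⟨{s.getD t false}, trivial, rfl⟩,
    pathProb, ENNReal.ofReal_prod_of_nonneg fun _ _ => bernoulliWeight_nonneg (hβ _).1 (hβ _).2 _]
  exact prod_congr rfl fun t _ =>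
    measure_preimage_eq_bernoulliWeight (fun i => (hβ i).1) hmeas hY _ _

theorem measure_run_mem [IsProbabilityMeasure μ] (hβ : ∀ i, 0 ≤ β i ∧ β i ≤ 1)
    (hmeas : ∀ p, Measurable (Y p)) (hindep : iIndepFun Y μ)
    (hY : ∀ t i, μ {ω | Y (t, i) ω = true} = ENNReal.ofReal (β i))
    (π : List (Fin 2 × Bool) → Fin 2) (S : Set (List (Fin 2 × Bool))) (n : ℕ) :
    μ {ω | run π (fun t i => Y (t, i) ω) n ∈ S} =
      ENNReal.ofReal (policyValue β π (S.indicator 1) n []) := by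
  classical
  set paths := (boolLists n).filter fun s => extend π [] s ∈ S
  have hlen : ∀ s ∈ paths, s.length = n := fun s hs => mem_boolLists.mp (mem_filter.mp hs).1
  have hunion : {ω | run π (fun t i => Y (t, i) ω) n ∈ S} =
      ⋃ s ∈ paths, {ω | run π (fun t i => Y (t, i) ω) s.length = extend π [] s} := by
    ext ω
    simp only [Set.mem_ofPred_eq, Set.mem_iUnion, exists_prop]
    constructor
    · intro hS
      refine ⟨(run π (fun t i => Y (t, i) ω) n).map Prod.snd, ?_, ?_⟩
      · rw [mem_filter, mem_boolLists, List.length_map, length_run, extend_map_snd_run]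
        exact ⟨rfl, hS⟩
      · rw [List.length_map, length_run, extend_map_snd_run]
    · rintro ⟨s, hs, hrun⟩
      rw [← hlen s hs, hrun]
      exact (mem_filter.mp hs).2
  have hdisj : (paths : Set (List Bool)).PairwiseDisjoint
      fun s => {ω | run π (fun t i => Y (t, i) ω) s.length = extend π [] s} := by
    intro s hs s' hs' hne
    refine Set.disjoint_left.mpr fun ω hω hω' => hne (extend_injective π [] ?_)
    rw [← hω, ← hω', hlen s hs, hlen s' hs']
  rw [hunion, measure_biUnion_finset hdisj fun s _ => measurableSet_run_eq_extend hmeas π s,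
    sum_congr rfl fun s _ => measure_run_eq_extend hβ hmeas hindep hY π s,
    ← ENNReal.ofReal_sum_of_nonneg fun s _ => pathProb_nonneg β π hβ [] s,
    policyValue_eq_sum, sum_filter]
  congr 1
  refine sum_congr rfl fun s _ => ?_
  by_cases hs : extend π [] s ∈ S <;> simp [hs]

end Measure

section Comparison

variable {ι : Type*} {β : ι → ℝ} (hβ : ∀ i, 0 ≤ β i ∧ β i ≤ 1) (π : List (ι × Bool) → ι)
  {g : List (ι × Bool) → ℝ} {F : ℕ → List (ι × Bool) → ℝ} {n : ℕ}
include hβ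

lemma policyValue_le_of_step (hg : ∀ h, h.length = n → g h ≤ F 0 h)
    (hF : ∀ k h, h.length + (k + 1) = n →
      β (π h) * F k (h ++ [(π h, true)]) + (1 - β (π h)) * F k (h ++ [(π h, false)]) ≤
        F (k + 1) h)
    (k : ℕ) (h : List (ι × Bool)) (hlen : h.length + k = n) :
    policyValue β π g k h ≤ F k h := by
  induction k generalizing h with
  | zero => exact hg h hlen
  | succ k ih =>
    obtain ⟨hβ₀, hβ₁⟩ := hβ (π h)
    refine le_trans (add_le_add ?_ ?_) (hF k h hlen)
    · exact mul_le_mul_of_nonneg_left (ih _ (by simp; omega)) hβ₀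
    · exact mul_le_mul_of_nonneg_left (ih _ (by simp; omega)) (by linarith)

lemma le_policyValue_of_step (hg : ∀ h, h.length = n → F 0 h ≤ g h)
    (hF : ∀ k h, h.length + (k + 1) = n →
      F (k + 1) h ≤
        β (π h) * F k (h ++ [(π h, true)]) + (1 - β (π h)) * F k (h ++ [(π h, false)]))
    (k : ℕ) (h : List (ι × Bool)) (hlen : h.length + k = n) :
    F k h ≤ policyValue β π g k h := by
  induction k generalizing h with
  | zero => exact hg h hlen
  | succ k ih =>
    obtain ⟨hβ₀, hβ₁⟩ := hβ (π h)
    refine le_trans (hF k h hlen) (add_le_add ?_ ?_)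
    · exact mul_le_mul_of_nonneg_left (ih _ (by simp; omega)) hβ₀
    · exact mul_le_mul_of_nonneg_left (ih _ (by simp; omega)) (by linarith)

end Comparison

/-- The probability of at least `r` successes in `k` Bernoulli(`p`) trials. -/
def binomTail (p : ℝ) : ℕ → ℕ → ℝ
  | _, 0 => 1
  | 0, _ + 1 => 0
  | k + 1, r + 1 => p * binomTail p k r + (1 - p) * binomTail p k (r + 1)

section BinomTail

variable {p : ℝ}

lemma binomTail_zero_right (k : ℕ) : binomTail p k 0 = 1 := by cases k <;> rfl

lemma binomTail_succ_sub (k q b : ℕ) :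
    binomTail p (k + 1) (q - b) =
      p * binomTail p k (q - (b + 1)) + (1 - p) * binomTail p k (q - b) := by
  rcases Nat.lt_or_ge b q with hbq | hqb
  · obtain ⟨r, hr⟩ : ∃ r, q - b = r + 1 := ⟨q - b - 1, by omega⟩
    rw [hr, show q - (b + 1) = r by omega]
    rfl
  · rw [Nat.sub_eq_zero_of_le hqb, Nat.sub_eq_zero_of_le (by omega), binomTail_zero_right,
      binomTail_zero_right]
    ring

variable (hp₀ : 0 ≤ p) (hp₁ : p ≤ 1)
include hp₀ hp₁

lemma binomTail_mem_Icc (k r : ℕ) : binomTail p k r ∈ Set.Icc 0 1 := by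
  induction k generalizing r with
  | zero => cases r <;> simp [binomTail]
  | succ k ih =>
    cases r with
    | zero => simp [binomTail]
    | succ r =>
      obtain ⟨h₀, h₁⟩ := ih r
      obtain ⟨h₀', h₁'⟩ := ih (r + 1)
      constructor <;> simp only [binomTail] <;> nlinarith

lemma binomTail_succ_right_le (k r : ℕ) : binomTail p k (r + 1) ≤ binomTail p k r := by
  induction k generalizing r with
  | zero => cases r <;> simp [binomTail]
  | succ k ih =>
    cases r with
    | zero => simpa [binomTail_zero_right] using (binomTail_mem_Icc hp₀ hp₁ (k + 1) 1).2
    | succ r =>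
      have := ih r
      have := ih (r + 1)
      simp only [binomTail]
      nlinarith

lemma binomTail_le_succ_left (k r : ℕ) : binomTail p k r ≤ binomTail p (k + 1) r := by
  cases r with
  | zero => simp [binomTail_zero_right]
  | succ r =>
    have := binomTail_succ_right_le hp₀ hp₁ k r
    simp only [binomTail]
    nlinarith

end BinomTail

/-- The probability that both users meet their demands `q₁`, `q₂` under earliest-deadline-first
when `k` slots remain, the last `m` of them past user `0`'s deadline, and users `0`, `1` have
`a`, `b` successes so far. -/
def edfValue (p₀ p₁ : ℝ) (q₁ q₂ m : ℕ) : ℕ → ℕ → ℕ → ℝ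
  | 0, a, b => if q₁ ≤ a then binomTail p₁ 0 (q₂ - b) else 0
  | k + 1, a, b =>
      if q₁ ≤ a then binomTail p₁ (k + 1) (q₂ - b)
      else if k + 1 ≤ m then 0
      else p₀ * edfValue p₀ p₁ q₁ q₂ m k (a + 1) b + (1 - p₀) * edfValue p₀ p₁ q₁ q₂ m k a b

section EdfValue

variable {p₀ p₁ : ℝ} {q₁ q₂ m : ℕ}

local notation "V" => edfValue p₀ p₁ q₁ q₂ m

lemma edfValue_of_le {a : ℕ} (ha : q₁ ≤ a) (k b : ℕ) : V k a b = binomTail p₁ k (q₂ - b) := by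
  cases k <;> simp [edfValue, ha]

lemma edfValue_of_le_m {a k : ℕ} (ha : a < q₁) (hk : k ≤ m) (b : ℕ) : V k a b = 0 := by
  cases k <;> simp [edfValue, Nat.not_le.mpr ha, hk]

lemma edfValue_succ {a k : ℕ} (ha : a < q₁) (hk : m ≤ k) (b : ℕ) :
    V (k + 1) a b = p₀ * V k (a + 1) b + (1 - p₀) * V k a b := by
  simp [edfValue, Nat.not_le.mpr ha, Nat.not_le.mpr (Nat.lt_succ_of_le hk)]

lemma edfValue_zero (a b : ℕ) : V 0 a b = if q₁ ≤ a ∧ q₂ ≤ b then 1 else 0 := by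
  by_cases ha : q₁ ≤ a
  · rw [edfValue_of_le ha]
    by_cases hb : q₂ ≤ b
    · simp [ha, hb, Nat.sub_eq_zero_of_le hb, binomTail_zero_right]
    · obtain ⟨r, hr⟩ : ∃ r, q₂ - b = r + 1 := ⟨q₂ - b - 1, by omega⟩
      simp [hb, hr, binomTail]
  · simp [edfValue, ha]

/-- Once user `0` is satisfied, EDF serves user `1` in every remaining slot. -/
lemma edfValue_succ_of_le {a : ℕ} (ha : q₁ ≤ a) (k b : ℕ) :
    V (k + 1) a b = p₁ * V k a (b + 1) + (1 - p₁) * V k a b := by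
  simp only [edfValue_of_le ha, binomTail_succ_sub]

lemma edfValue_serve_zero_le (hp₁ : 0 ≤ p₁ ∧ p₁ ≤ 1) {k : ℕ} (hk : m ≤ k) (a b : ℕ) :
    p₀ * V k (a + 1) b + (1 - p₀) * V k a b ≤ V (k + 1) a b := by
  rcases le_or_gt q₁ a with ha | ha
  · rw [edfValue_of_le ha, edfValue_of_le (by omega), edfValue_of_le ha]
    have := binomTail_le_succ_left hp₁.1 hp₁.2 k (q₂ - b)
    nlinarith
  · exact (edfValue_succ ha hk b).ge

variable (hp₀ : 0 ≤ p₀ ∧ p₀ ≤ 1) (hp₁ : 0 ≤ p₁ ∧ p₁ ≤ 1)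
include hp₀ hp₁

lemma edfValue_nonneg (k a b : ℕ) : 0 ≤ V k a b := by
  induction k generalizing a with
  | zero => rw [edfValue_zero]; split_ifs <;> norm_num
  | succ k ih =>
    rcases le_or_gt q₁ a with ha | ha
    · rw [edfValue_of_le ha]
      exact (binomTail_mem_Icc hp₁.1 hp₁.2 _ _).1
    rcases le_or_gt m k with hk | hk
    · rw [edfValue_succ ha hk]
      have := ih (a + 1)
      have := ih a
      nlinarith
    · rw [edfValue_of_le_m ha hk]

lemma edfValue_le_succ_count (k a b : ℕ) : V k a b ≤ V k (a + 1) b := by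
  induction k generalizing a with
  | zero =>
    rw [edfValue_zero, edfValue_zero]
    split_ifs with h h' <;> norm_num
    exact h' ⟨by omega, h.2⟩
  | succ k ih =>
    rcases le_or_gt q₁ a with ha | ha
    · rw [edfValue_of_le ha, edfValue_of_le (by omega)]
    rcases le_or_gt m k with hk | hk
    · rw [edfValue_succ ha hk]
      rcases le_or_gt q₁ (a + 1) with ha' | ha'
      · rw [edfValue_of_le ha', edfValue_of_le ha']
        have := (ih a).trans (edfValue_of_le ha' k b).le
        have := binomTail_le_succ_left hp₁.1 hp₁.2 k (q₂ - b)
        nlinarith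
      · rw [edfValue_succ ha' hk]
        have := ih (a + 1)
        have := ih a
        nlinarith
    · rw [edfValue_of_le_m ha hk]
      exact edfValue_nonneg hp₀ hp₁ _ _ _

lemma edfValue_le_succ_slots (k a b : ℕ) : V k a b ≤ V (k + 1) a b := by
  rcases le_or_gt q₁ a with ha | ha
  · rw [edfValue_of_le ha, edfValue_of_le ha]
    exact binomTail_le_succ_left hp₁.1 hp₁.2 k (q₂ - b)
  rcases le_or_gt m k with hk | hk
  · rw [edfValue_succ ha hk]
    have := edfValue_le_succ_count (q₁ := q₁) (q₂ := q₂) (m := m) hp₀ hp₁ k a b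
    nlinarith
  · rw [edfValue_of_le_m ha hk.le, edfValue_of_le_m ha hk]

/-- The exchange argument: serving user `1` now and then following EDF is no better than
following EDF. -/
lemma edfValue_serve_one_le (k a b : ℕ) :
    p₁ * V k a (b + 1) + (1 - p₁) * V k a b ≤ V (k + 1) a b := by
  induction k generalizing a with
  | zero =>
    rcases le_or_gt q₁ a with ha | ha
    · exact (edfValue_succ_of_le ha 0 b).ge
    · simpa [edfValue_of_le_m ha (Nat.zero_le m)] using edfValue_nonneg hp₀ hp₁ 1 a b
  | succ k ih =>
    rcases le_or_gt q₁ a with ha | ha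
    · exact (edfValue_succ_of_le ha _ b).ge
    rcases le_or_gt m k with hk | hk
    · rw [edfValue_succ ha hk, edfValue_succ ha hk, edfValue_succ ha (by omega : m ≤ k + 1)]
      have := mul_le_mul_of_nonneg_left (ih (a + 1)) hp₀.1
      have := mul_le_mul_of_nonneg_left (ih a) (by linarith : 0 ≤ 1 - p₀)
      nlinarith
    · rw [edfValue_of_le_m ha hk, edfValue_of_le_m ha hk]
      simpa using edfValue_nonneg hp₀ hp₁ (k + 2) a b

end EdfValue

section Histories

lemma succCount_append_self (i : Fin 2) (h : List (Fin 2 × Bool)) (x : Bool) :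
    succCount i (h ++ [(i, x)]) = succCount i h + x.toNat := by
  cases x <;> simp [succCount]

lemma succCount_append_of_ne {i j : Fin 2} (hji : j ≠ i) (h : List (Fin 2 × Bool)) (x : Bool) :
    succCount i (h ++ [(j, x)]) = succCount i h := by
  simp [succCount, hji]

lemma succCount_take_le (i : Fin 2) (h : List (Fin 2 × Bool)) (l : ℕ) :
    succCount i (h.take l) ≤ succCount i h :=
  (List.take_sublist l h).countP_le

lemma take_append_singleton_of_lt {α : Type*} {h : List α} {l : ℕ} (hl : h.length < l) (y : α) :
    (h ++ [y]).take l = h.take l ++ [y] := by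
  rw [List.take_of_length_le hl.le, List.take_of_length_le (by simp; omega)]

def bothMet (q₁ q₂ l₁ : ℕ) : Set (List (Fin 2 × Bool)) :=
  {h | q₁ ≤ succCount 0 (h.take l₁) ∧ q₂ ≤ succCount 1 h}

def edf (q₁ : ℕ) (h : List (Fin 2 × Bool)) : Fin 2 := if succCount 0 h < q₁ then 0 else 1

/-- `edfValue` read off a history: user `0`'s successes only count within its first `l₁` slots,
and a history of length `l₂ - k` leaves `k` slots, the last `l₂ - l₁` of them past user `0`'s
deadline. -/
def edfStateValue (β : Fin 2 → ℝ) (q₁ q₂ l₁ l₂ k : ℕ) (h : List (Fin 2 × Bool)) : ℝ :=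
  edfValue (β 0) (β 1) q₁ q₂ (l₂ - l₁) k (succCount 0 (h.take l₁)) (succCount 1 h)

variable {β : Fin 2 → ℝ} {q₁ q₂ l₁ l₂ : ℕ}

lemma indicator_bothMet (h : List (Fin 2 × Bool)) :
    (bothMet q₁ q₂ l₁).indicator 1 h = edfStateValue β q₁ q₂ l₁ l₂ 0 h := by
  simp only [edfStateValue, edfValue_zero, Set.indicator_apply, bothMet, Set.mem_ofPred_eq,
    Pi.one_apply]

variable (hβ : ∀ i, 0 ≤ β i ∧ β i ≤ 1)
include hβ

lemma step_le_edfStateValue (k : ℕ) (h : List (Fin 2 × Bool)) (hlen : h.length + (k + 1) = l₂)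
    (i : Fin 2) :
    β i * edfStateValue β q₁ q₂ l₁ l₂ k (h ++ [(i, true)]) +
        (1 - β i) * edfStateValue β q₁ q₂ l₁ l₂ k (h ++ [(i, false)]) ≤
      edfStateValue β q₁ q₂ l₁ l₂ (k + 1) h := by
  obtain rfl | rfl : i = 0 ∨ i = 1 := by fin_cases i <;> simp
  · by_cases hl : h.length < l₁
    · simp only [edfStateValue, take_append_singleton_of_lt hl, succCount_append_self,
        succCount_append_of_ne zero_ne_one, Bool.toNat_true, Bool.toNat_false, add_zero]
      exact edfValue_serve_zero_le (hβ 1) (by omega) _ _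
    · simp only [edfStateValue, List.take_append_of_le_length (Nat.le_of_not_lt hl),
        succCount_append_of_ne zero_ne_one, ← add_mul, add_sub_cancel, one_mul]
      exact edfValue_le_succ_slots (hβ 0) (hβ 1) k _ _
  · have hA : ∀ x, succCount 0 ((h ++ [(1, x)]).take l₁) = succCount 0 (h.take l₁) := by
      intro x
      by_cases hl : h.length < l₁
      · rw [take_append_singleton_of_lt hl, succCount_append_of_ne one_ne_zero]
      · rw [List.take_append_of_le_length (Nat.le_of_not_lt hl)]
    simp only [edfStateValue, hA, succCount_append_self, Bool.toNat_true, Bool.toNat_false,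
      add_zero]
    exact edfValue_serve_one_le (hβ 0) (hβ 1) k _ _

lemma edfStateValue_le_step_edf (k : ℕ) (h : List (Fin 2 × Bool))
    (hlen : h.length + (k + 1) = l₂) :
    edfStateValue β q₁ q₂ l₁ l₂ (k + 1) h ≤
      β (edf q₁ h) * edfStateValue β q₁ q₂ l₁ l₂ k (h ++ [(edf q₁ h, true)]) +
        (1 - β (edf q₁ h)) * edfStateValue β q₁ q₂ l₁ l₂ k (h ++ [(edf q₁ h, false)]) := by
  rcases le_or_gt q₁ (succCount 0 (h.take l₁)) with ha | ha
  · have hedf : edf q₁ h = 1 := if_neg (Nat.not_lt.mpr (ha.trans (succCount_take_le 0 h l₁)))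
    have hA : ∀ x, succCount 0 ((h ++ [(1, x)]).take l₁) = succCount 0 (h.take l₁) := by
      intro x
      by_cases hl : h.length < l₁
      · rw [take_append_singleton_of_lt hl, succCount_append_of_ne one_ne_zero]
      · rw [List.take_append_of_le_length (Nat.le_of_not_lt hl)]
    simp only [edfStateValue, hedf, hA, succCount_append_self, Bool.toNat_true, Bool.toNat_false,
      add_zero]
    exact (edfValue_succ_of_le ha k _).le
  rcases le_or_gt (k + 1) (l₂ - l₁) with hk | hk
  · have hzero : edfStateValue β q₁ q₂ l₁ l₂ (k + 1) h = 0 := edfValue_of_le_m ha hk _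
    obtain ⟨hβ₀, hβ₁⟩ := hβ (edf q₁ h)
    rw [hzero]
    exact add_nonneg (mul_nonneg hβ₀ (edfValue_nonneg (hβ 0) (hβ 1) _ _ _))
      (mul_nonneg (by linarith) (edfValue_nonneg (hβ 0) (hβ 1) _ _ _))
  · have hl : h.length < l₁ := by omega
    have hedf : edf q₁ h = 0 := if_pos (by rwa [List.take_of_length_le hl.le] at ha)
    simp only [edfStateValue, hedf, take_append_singleton_of_lt hl, succCount_append_self,
      succCount_append_of_ne zero_ne_one, Bool.toNat_true, Bool.toNat_false, add_zero]
    exact (edfValue_succ ha (by omega) _).le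

lemma policyValue_le_edfStateValue (π : List (Fin 2 × Bool) → Fin 2) :
    policyValue β π ((bothMet q₁ q₂ l₁).indicator 1) l₂ [] ≤
      edfStateValue β q₁ q₂ l₁ l₂ l₂ [] :=
  policyValue_le_of_step hβ π (fun h _ => (indicator_bothMet h).le)
    (fun k h hlen => step_le_edfStateValue hβ k h hlen (π h)) l₂ [] (zero_add l₂)

lemma edfStateValue_le_policyValue_edf :
    edfStateValue β q₁ q₂ l₁ l₂ l₂ [] ≤
      policyValue β (edf q₁) ((bothMet q₁ q₂ l₁).indicator 1) l₂ [] :=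
  le_policyValue_of_step hβ (edf q₁) (fun h _ => (indicator_bothMet h).ge)
    (fun k h hlen => edfStateValue_le_step_edf hβ k h hlen) l₂ [] (zero_add l₂)

end Histories

end TwoUserScheduling

open TwoUserScheduling

theorem stmt_7_general {Ω : Type*} [MeasurableSpace Ω] (μ : Measure Ω) [IsProbabilityMeasure μ]
    (β : Fin 2 → ℝ) (hβ : ∀ i, 0 < β i ∧ β i ≤ 1)
    (Y : ℕ × Fin 2 → Ω → Bool) (hmeas : ∀ p, Measurable (Y p))
    (hindep : iIndepFun Y μ)
    (hY : ∀ t i, μ {ω | Y (t, i) ω = true} = ENNReal.ofReal (β i))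
    (l₁ l₂ q₁ q₂ : ℕ) (h12 : l₁ ≤ l₂)
    (π : List (Fin 2 × Bool) → Fin 2) :
    μ {ω | q₁ ≤ succCount 0 (run π (fun t i => Y (t, i) ω) l₁) ∧
           q₂ ≤ succCount 1 (run π (fun t i => Y (t, i) ω) l₂)} ≤
      μ {ω | q₁ ≤ succCount 0
              (run (fun h => if succCount 0 h < q₁ then 0 else 1)
                (fun t i => Y (t, i) ω) l₁) ∧
             q₂ ≤ succCount 1
              (run (fun h => if succCount 0 h < q₁ then 0 else 1)
                (fun t i => Y (t, i) ω) l₂)} := by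
  have hβ' : ∀ i, 0 ≤ β i ∧ β i ≤ 1 := fun i => ⟨(hβ i).1.le, (hβ i).2⟩
  have hevent : ∀ σ : List (Fin 2 × Bool) → Fin 2,
      {ω | q₁ ≤ succCount 0 (run σ (fun t i => Y (t, i) ω) l₁) ∧
          q₂ ≤ succCount 1 (run σ (fun t i => Y (t, i) ω) l₂)} =
        {ω | run σ (fun t i => Y (t, i) ω) l₂ ∈ bothMet q₁ q₂ l₁} := by
    intro σ
    ext ω
    rw [Set.mem_ofPred_eq, Set.mem_ofPred_eq, bothMet, Set.mem_ofPred_eq, take_run σ _ h12]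
  rw [hevent, hevent, measure_run_mem hβ' hmeas hindep hY, measure_run_mem hβ' hmeas hindep hY]
  exact ENNReal.ofReal_le_ofReal ((policyValue_le_edfStateValue hβ' π).trans
    (edfStateValue_le_policyValue_edf hβ'))

/-- Two users, horizon `T`: user `0` needs `q₁` packets within the first `l₁` slots and
user `1` needs `q₂` packets within the first `l₂` slots, with `l₁ ≤ l₂ ≤ T`; serving in
each slot succeeds with probability `β i` for the served user `i`, independently across
slots. The earliest-deadline-first policy — serve user `0` until its demand is met, then
user `1` — maximizes the probability that both users meet their deadlines, over all
(possibly history-dependent) policies. -/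
theorem stmt_7 {Ω : Type*} [MeasurableSpace Ω] (μ : Measure Ω) [IsProbabilityMeasure μ]
    (β : Fin 2 → ℝ) (hβ : ∀ i, 0 < β i ∧ β i ≤ 1)
    (Y : ℕ × Fin 2 → Ω → Bool) (hmeas : ∀ p, Measurable (Y p))
    (hindep : iIndepFun Y μ)
    (hY : ∀ t i, μ {ω | Y (t, i) ω = true} = ENNReal.ofReal (β i))
    (T l₁ l₂ q₁ q₂ : ℕ) (h12 : l₁ ≤ l₂) (h2T : l₂ ≤ T)
    (π : List (Fin 2 × Bool) → Fin 2) :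
    μ {ω | q₁ ≤ succCount 0 (run π (fun t i => Y (t, i) ω) l₁) ∧
           q₂ ≤ succCount 1 (run π (fun t i => Y (t, i) ω) l₂)} ≤
      μ {ω | q₁ ≤ succCount 0
              (run (fun h => if succCount 0 h < q₁ then 0 else 1)
                (fun t i => Y (t, i) ω) l₁) ∧
             q₂ ≤ succCount 1
              (run (fun h => if succCount 0 h < q₁ then 0 else 1)
                (fun t i => Y (t, i) ω) l₂)} :=
  stmt_7_general μ β hβ Y hmeas hindep hY l₁ l₂ q₁ q₂ h12 π
end
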